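/- arXiv:1110.3705 — 2 statements merged into one kernel-verified Lean document; each statement's English description precedes it below -/
import Mathlib

section
/- Adjustment lemma: if v' lies in the LU-region of v, then there exists a valuation v₁' in the neighbourhood of v' such that v ⊑_LU v₁'. -/
/-- The LU-preorder on (nonnegative real) clock valuations. -/
def simLU {X : Type*} (L U : X → ℕ) (v v' : X → ℝ) : Prop :=
  ∀ x, (v' x < v x → (L x : ℝ) < v' x) ∧ (v x < v' x → (U x : ℝ) < v x)

/-- v and v' satisfy exactly the same LU-guards. -/
def sameLUGuards {X : Type*} (L U : X → ℕ) (v v' : X → ℝ) : Prop :=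
  ∀ x, ∀ c : ℕ,
    (c ≤ L x → (((c : ℝ) < v x ↔ (c : ℝ) < v' x) ∧ ((c : ℝ) ≤ v x ↔ (c : ℝ) ≤ v' x))) ∧
    (c ≤ U x → ((v x < (c : ℝ) ↔ v' x < (c : ℝ)) ∧ (v x ≤ (c : ℝ) ↔ v' x ≤ (c : ℝ))))

/-- v' belongs to the LU-region of v. -/
def memRLU {X : Type*} (L U : X → ℕ) (v v' : X → ℝ) : Prop :=
  sameLUGuards L U v v' ∧
  ∀ x y : X, ⌊v x⌋ = ⌊v' x⌋ → ⌊v y⌋ = ⌊v' y⌋ →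
    v x ≤ (U x : ℝ) → v y ≤ (L y : ℝ) →
    (Int.fract (v x) < Int.fract (v y) → Int.fract (v' x) < Int.fract (v' y)) ∧
    (Int.fract (v x) = Int.fract (v y) → Int.fract (v' x) ≤ Int.fract (v' y))

/-- v₁ is in the neighbourhood of v. -/
def nbd {X : Type*} (v v₁ : X → ℝ) : Prop :=
  ∀ x y : X,
    ⌊v x⌋ = ⌊v₁ x⌋ ∧
    (Int.fract (v x) = 0 ↔ Int.fract (v₁ x) = 0) ∧
    (Int.fract (v x) < Int.fract (v y) → Int.fract (v₁ x) < Int.fract (v₁ y)) ∧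
    (Int.fract (v x) = Int.fract (v y) → Int.fract (v₁ x) = Int.fract (v₁ y))

/-!
Take `v₁' x = ⌊v' x⌋ + φ (frac (v' x))` for a map `φ` that is strictly increasing on `[0, 1)`,
fixes `0` and maps `[0, 1)` into itself: any such `v₁'` lies in the neighbourhood of `v'`. Among
the clocks on which `v` and `v'` have the same integer part, those with `v x ≤ L x` ask for
`frac (v x) ≤ φ (frac (v' x))` and those with `v x ≤ U x` for `φ (frac (v' x)) ≤ frac (v x)`.
The region condition says precisely that these lower and upper constraints are compatible, and
`φ t = (1 - t) B t + t A t` meets them, where `B t` is the largest lower constraint at a level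
`≤ t` and `A t` the smallest upper constraint at a level `≥ t`. The guards shared by `v` and `v'`
(hence by `v` and `v₁'`) then settle every clock whose integer part differs, giving `v ⊑_LU v₁'`.
-/

open Finset

section Envelope

variable (lo up : Finset (ℝ × ℝ))

noncomputable def lowerEnvelope (t : ℝ) : ℝ :=
  (insert 0 ((lo.filter fun p => p.1 ≤ t).image Prod.snd)).max' (insert_nonempty _ _)

noncomputable def upperEnvelope (t : ℝ) : ℝ :=
  (insert 1 ((up.filter fun q => t ≤ q.1).image Prod.snd)).min' (insert_nonempty _ _)

/-- The weight `t` on the upper envelope makes this strictly increasing even where both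
envelopes are constant. -/
noncomputable def envelopeBlend (t : ℝ) : ℝ :=
  (1 - t) * lowerEnvelope lo t + t * upperEnvelope up t

variable {lo up}

lemma le_lowerEnvelope {p : ℝ × ℝ} (hp : p ∈ lo) {t : ℝ} (ht : p.1 ≤ t) :
    p.2 ≤ lowerEnvelope lo t :=
  le_max' _ _ (mem_insert_of_mem (mem_image_of_mem _ (mem_filter.2 ⟨hp, ht⟩)))

lemma lowerEnvelope_nonneg (t : ℝ) : 0 ≤ lowerEnvelope lo t :=
  le_max' _ _ (mem_insert_self _ _)

lemma lowerEnvelope_eq_zero_or (t : ℝ) :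
    lowerEnvelope lo t = 0 ∨ ∃ p ∈ lo, p.1 ≤ t ∧ lowerEnvelope lo t = p.2 := by
  rcases mem_insert.1 (max'_mem _ _ : lowerEnvelope lo t ∈ _) with h | h
  · exact .inl h
  · obtain ⟨p, hp, hpt⟩ := mem_image.1 h
    exact .inr ⟨p, (mem_filter.1 hp).1, (mem_filter.1 hp).2, hpt.symm⟩

lemma lowerEnvelope_mono : Monotone (lowerEnvelope lo) := by
  intro t t' htt'
  rcases lowerEnvelope_eq_zero_or (lo := lo) t with h | ⟨p, hp, hpt, h⟩ <;> rw [h]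
  · exact lowerEnvelope_nonneg t'
  · exact le_lowerEnvelope hp (hpt.trans htt')

lemma upperEnvelope_le {q : ℝ × ℝ} (hq : q ∈ up) {t : ℝ} (ht : t ≤ q.1) :
    upperEnvelope up t ≤ q.2 :=
  min'_le _ _ (mem_insert_of_mem (mem_image_of_mem _ (mem_filter.2 ⟨hq, ht⟩)))

lemma upperEnvelope_le_one (t : ℝ) : upperEnvelope up t ≤ 1 :=
  min'_le _ _ (mem_insert_self _ _)

lemma upperEnvelope_eq_one_or (t : ℝ) :
    upperEnvelope up t = 1 ∨ ∃ q ∈ up, t ≤ q.1 ∧ upperEnvelope up t = q.2 := by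
  rcases mem_insert.1 (min'_mem _ _ : upperEnvelope up t ∈ _) with h | h
  · exact .inl h
  · obtain ⟨q, hq, hqt⟩ := mem_image.1 h
    exact .inr ⟨q, (mem_filter.1 hq).1, (mem_filter.1 hq).2, hqt.symm⟩

lemma upperEnvelope_mono : Monotone (upperEnvelope up) := by
  intro t t' htt'
  rcases upperEnvelope_eq_one_or (up := up) t' with h | ⟨q, hq, hqt, h⟩ <;> rw [h]
  · exact upperEnvelope_le_one t
  · exact upperEnvelope_le hq (htt'.trans hqt)

lemma lowerEnvelope_lt_one (hlo : ∀ p ∈ lo, p.2 < 1) (t : ℝ) : lowerEnvelope lo t < 1 := by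
  rcases lowerEnvelope_eq_zero_or (lo := lo) t with h | ⟨p, hp, -, h⟩ <;> rw [h]
  · exact zero_lt_one
  · exact hlo p hp

lemma lowerEnvelope_zero (hlo0 : ∀ p ∈ lo, p.1 ≤ 0 → p.2 ≤ 0) : lowerEnvelope lo 0 = 0 := by
  rcases lowerEnvelope_eq_zero_or (lo := lo) 0 with h | ⟨p, hp, hp0, h⟩
  · exact h
  · exact le_antisymm (h ▸ hlo0 p hp hp0) (lowerEnvelope_nonneg 0)

lemma lowerEnvelope_le_upperEnvelope (hlo : ∀ p ∈ lo, p.2 < 1) (hup : ∀ q ∈ up, 0 ≤ q.2)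
    (hle : ∀ p ∈ lo, ∀ q ∈ up, p.1 ≤ q.1 → p.2 ≤ q.2) (t : ℝ) :
    lowerEnvelope lo t ≤ upperEnvelope up t := by
  rcases lowerEnvelope_eq_zero_or (lo := lo) t with hB | ⟨p, hp, hpt, hB⟩ <;>
  rcases upperEnvelope_eq_one_or (up := up) t with hA | ⟨q, hq, hqt, hA⟩ <;>
  rw [hB, hA]
  · exact zero_le_one
  · exact hup q hq
  · exact (hlo p hp).le
  · exact hle p hp q hq (hpt.trans hqt)

lemma lowerEnvelope_lt_upperEnvelope (hlo : ∀ p ∈ lo, p.2 < 1)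
    (hup0 : ∀ q ∈ up, 0 < q.1 → 0 < q.2) (hlt : ∀ p ∈ lo, ∀ q ∈ up, p.1 < q.1 → p.2 < q.2)
    {t t' : ℝ} (ht : 0 ≤ t) (htt' : t < t') : lowerEnvelope lo t < upperEnvelope up t' := by
  rcases lowerEnvelope_eq_zero_or (lo := lo) t with hB | ⟨p, hp, hpt, hB⟩ <;>
  rcases upperEnvelope_eq_one_or (up := up) t' with hA | ⟨q, hq, hqt, hA⟩ <;>
  rw [hB, hA]
  · exact zero_lt_one
  · exact hup0 q hq (ht.trans_lt (htt'.trans_le hqt))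
  · exact hlo p hp
  · exact hlt p hp q hq (hpt.trans_lt (htt'.trans_le hqt))

lemma envelopeBlend_zero : envelopeBlend lo up 0 = lowerEnvelope lo 0 := by
  simp [envelopeBlend]

lemma envelopeBlend_lt_one (hlo : ∀ p ∈ lo, p.2 < 1) {t : ℝ} (ht : t ∈ Set.Ico 0 1) :
    envelopeBlend lo up t < 1 := by
  have hB := lowerEnvelope_lt_one hlo t
  have hA := upperEnvelope_le_one (up := up) t
  unfold envelopeBlend
  nlinarith [ht.1, ht.2]

lemma lowerEnvelope_le_envelopeBlend {t : ℝ} (ht : 0 ≤ t)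
    (hBA : lowerEnvelope lo t ≤ upperEnvelope up t) :
    lowerEnvelope lo t ≤ envelopeBlend lo up t := by
  unfold envelopeBlend
  nlinarith

lemma envelopeBlend_le_upperEnvelope {t : ℝ} (ht : t ≤ 1)
    (hBA : lowerEnvelope lo t ≤ upperEnvelope up t) :
    envelopeBlend lo up t ≤ upperEnvelope up t := by
  unfold envelopeBlend
  nlinarith

lemma envelopeBlend_strictMonoOn
    (hBA : ∀ t t', 0 ≤ t → t < t' → lowerEnvelope lo t < upperEnvelope up t') :
    StrictMonoOn (envelopeBlend lo up) (Set.Ico 0 1) := by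
  intro t ht t' ht' htt'
  have hB := lowerEnvelope_mono (lo := lo) htt'.le
  have hA := upperEnvelope_mono (up := up) htt'.le
  have hBA := hBA t t' ht.1 htt'
  unfold envelopeBlend
  nlinarith [ht.1, ht'.2]

theorem exists_strictMonoOn_between (hlo : ∀ p ∈ lo, p.2 < 1) (hup : ∀ q ∈ up, 0 ≤ q.2)
    (hlo0 : ∀ p ∈ lo, p.1 ≤ 0 → p.2 ≤ 0) (hup0 : ∀ q ∈ up, 0 < q.1 → 0 < q.2)
    (hle : ∀ p ∈ lo, ∀ q ∈ up, p.1 ≤ q.1 → p.2 ≤ q.2)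
    (hlt : ∀ p ∈ lo, ∀ q ∈ up, p.1 < q.1 → p.2 < q.2) :
    ∃ φ : ℝ → ℝ, StrictMonoOn φ (Set.Ico 0 1) ∧ φ 0 = 0 ∧ Set.MapsTo φ (Set.Ico 0 1) (Set.Ico 0 1) ∧
      (∀ p ∈ lo, p.1 ∈ Set.Ico 0 1 → p.2 ≤ φ p.1) ∧
      (∀ q ∈ up, q.1 ∈ Set.Ico 0 1 → φ q.1 ≤ q.2) := by
  have hBA := lowerEnvelope_le_upperEnvelope hlo hup hle
  have hmono := envelopeBlend_strictMonoOn fun t t' => lowerEnvelope_lt_upperEnvelope hlo hup0 hlt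
  have h0 : envelopeBlend lo up 0 = 0 := envelopeBlend_zero.trans (lowerEnvelope_zero hlo0)
  refine ⟨envelopeBlend lo up, hmono, h0, fun t ht => ⟨?_, envelopeBlend_lt_one hlo ht⟩,
    fun p hp hp1 => ?_, fun q hq hq1 => ?_⟩
  · exact h0 ▸ hmono.monotoneOn (Set.left_mem_Ico.2 one_pos) ht ht.1
  · exact (le_lowerEnvelope hp le_rfl).trans (lowerEnvelope_le_envelopeBlend hp1.1 (hBA _))
  · exact (envelopeBlend_le_upperEnvelope hq1.2.le (hBA _)).trans (upperEnvelope_le hq le_rfl)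

end Envelope

section FloorFract

lemma fract_mem_Ico (a : ℝ) : Int.fract a ∈ Set.Ico 0 1 :=
  ⟨Int.fract_nonneg a, Int.fract_lt_one a⟩

variable {a b : ℝ}

lemma fract_le_fract_iff_of_floor_eq (hfl : ⌊a⌋ = ⌊b⌋) : Int.fract a ≤ Int.fract b ↔ a ≤ b := by
  rw [Int.fract, Int.fract, hfl, sub_le_sub_iff_right]

lemma floor_intCast_add_eq_and_fract_intCast_add_eq (n : ℤ) {s : ℝ} (hs : s ∈ Set.Ico 0 1) :
    ⌊(n : ℝ) + s⌋ = n ∧ Int.fract ((n : ℝ) + s) = s := by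
  rw [Int.floor_intCast_add, Int.floor_eq_zero_iff.2 hs, Int.fract_intCast_add,
    Int.fract_eq_self.2 hs]
  exact ⟨add_zero n, rfl⟩

lemma ceil_eq_of_floor_eq (hfl : ⌊a⌋ = ⌊b⌋) (hfr : Int.fract a = 0 ↔ Int.fract b = 0) :
    ⌈a⌉ = ⌈b⌉ := by
  by_cases ha : Int.fract a = 0
  · rw [← Int.floor_add_fract a, ← Int.floor_add_fract b, ha, hfr.1 ha, hfl]
  · have hb : Int.fract b ≠ 0 := mt hfr.2 ha
    have hfl' : (⌊a⌋ : ℝ) = ⌊b⌋ := congrArg _ hfl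
    apply Int.cast_injective (α := ℝ)
    rw [Int.ceil_eq_add_one_sub_fract ha, Int.ceil_eq_add_one_sub_fract hb]
    linarith [Int.floor_add_fract a, Int.floor_add_fract b]

lemma floor_eq_and_fract_pos_of_mem_Ioo {n : ℕ} (h : a ∈ Set.Ioo (n : ℝ) (n + 1)) :
    ⌊a⌋ = n ∧ 0 < Int.fract a := by
  have hfl : ⌊a⌋ = n := Int.floor_eq_iff.2 ⟨by exact_mod_cast h.1.le, by exact_mod_cast h.2⟩
  refine ⟨hfl, ?_⟩
  rw [Int.fract, hfl]
  push_cast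
  linarith [h.1]

lemma mem_Ioo_natFloor_of_fract_pos (ha : 0 ≤ a) (hf : 0 < Int.fract a) :
    a ∈ Set.Ioo (⌊a⌋₊ : ℝ) (⌊a⌋₊ + 1) := by
  rw [natCast_floor_eq_intCast_floor ha]
  exact ⟨by linarith [Int.floor_add_fract a], Int.lt_floor_add_one a⟩

lemma natFloor_eq_of_fract_eq_zero (ha : 0 ≤ a) (hf : Int.fract a = 0) : (⌊a⌋₊ : ℝ) = a := by
  rw [natCast_floor_eq_intCast_floor ha]
  linarith [Int.floor_add_fract a]

end FloorFract

section Guards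

variable {X : Type*} {L U : X → ℕ} {u v w : X → ℝ}

lemma sameLUGuards.trans (huv : sameLUGuards L U u v) (hvw : sameLUGuards L U v w) :
    sameLUGuards L U u w := fun x c =>
  ⟨fun hc => ⟨((huv x c).1 hc).1.trans ((hvw x c).1 hc).1,
      ((huv x c).1 hc).2.trans ((hvw x c).1 hc).2⟩,
    fun hc => ⟨((huv x c).2 hc).1.trans ((hvw x c).2 hc).1,
      ((huv x c).2 hc).2.trans ((hvw x c).2 hc).2⟩⟩

lemma sameLUGuards_of_floor_eq_of_ceil_eq (h : ∀ x, ⌊v x⌋ = ⌊w x⌋ ∧ ⌈v x⌉ = ⌈w x⌉) :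
    sameLUGuards L U v w := by
  intro x c
  obtain ⟨hfl, hce⟩ := h x
  simp only [← Int.cast_natCast (R := ℝ) c, ← Int.lt_ceil, ← Int.le_floor, ← Int.floor_lt,
    ← Int.ceil_le, hfl, hce]
  simp

lemma nbd.sameLUGuards (h : nbd v w) : sameLUGuards L U v w :=
  sameLUGuards_of_floor_eq_of_ceil_eq fun x =>
    ⟨(h x x).1, ceil_eq_of_floor_eq (h x x).1 (h x x).2.1⟩

namespace sameLUGuards

variable (hg : sameLUGuards L U v w) {x : X} (hx : 0 ≤ v x)
include hg hx

lemma le_of_le_L_of_fract_eq_zero (hL : v x ≤ L x) (hf : Int.fract (v x) = 0) : v x ≤ w x := by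
  have hn := natFloor_eq_of_fract_eq_zero hx hf
  rw [← hn] at hL ⊢
  exact ((hg x _).1 (mod_cast hL)).2.1 hn.le

lemma le_of_le_U_of_fract_eq_zero (hU : v x ≤ U x) (hf : Int.fract (v x) = 0) : w x ≤ v x := by
  have hn := natFloor_eq_of_fract_eq_zero hx hf
  rw [← hn] at hU ⊢
  exact ((hg x _).2 (mod_cast hU)).2.1 hn.ge

lemma floor_eq_of_le_L_of_fract_pos (hL : v x ≤ L x) (hf : 0 < Int.fract (v x)) :
    ⌊v x⌋ = ⌊w x⌋ ∧ 0 < Int.fract (w x) := by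
  set n := ⌊v x⌋₊
  have hv := mem_Ioo_natFloor_of_fract_pos hx hf
  have hnL : n + 1 ≤ L x := Nat.cast_lt.1 (hv.1.trans_le hL)
  have hn1 := ((hg x (n + 1)).1 hnL).2
  push_cast at hn1
  have hw : w x ∈ Set.Ioo (n : ℝ) (n + 1) :=
    ⟨((hg x n).1 (by omega)).1.1 hv.1, not_le.1 fun h => hv.2.not_ge (hn1.2 h)⟩
  obtain ⟨hw, hw'⟩ := floor_eq_and_fract_pos_of_mem_Ioo hw
  exact ⟨(floor_eq_and_fract_pos_of_mem_Ioo hv).1.trans hw.symm, hw'⟩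

lemma floor_eq_of_le_U_of_fract_pos (hU : v x ≤ U x) (hf : 0 < Int.fract (v x)) :
    ⌊v x⌋ = ⌊w x⌋ := by
  set n := ⌊v x⌋₊
  have hv := mem_Ioo_natFloor_of_fract_pos hx hf
  have hnU : n + 1 ≤ U x := Nat.cast_lt.1 (hv.1.trans_le hU)
  have hn1 := ((hg x (n + 1)).2 hnU).1
  push_cast at hn1
  have hw : w x ∈ Set.Ioo (n : ℝ) (n + 1) :=
    ⟨not_le.1 fun h => hv.1.not_ge ((((hg x n).2 (by omega)).2).2 h), hn1.1 hv.2⟩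
  rw [(floor_eq_and_fract_pos_of_mem_Ioo hv).1, (floor_eq_and_fract_pos_of_mem_Ioo hw).1]

end sameLUGuards

end Guards

lemma simLU_of_sameLUGuards {X : Type*} {L U : X → ℕ} {v w : X → ℝ} (hv : ∀ x, 0 ≤ v x)
    (hg : sameLUGuards L U v w)
    (hL : ∀ x, v x ≤ L x → ⌊v x⌋ = ⌊w x⌋ → Int.fract (v x) ≤ Int.fract (w x))
    (hU : ∀ x, v x ≤ U x → ⌊v x⌋ = ⌊w x⌋ → Int.fract (w x) ≤ Int.fract (v x)) :
    simLU L U v w := by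
  intro x
  refine ⟨fun hwv => ?_, fun hvw => ?_⟩
  · rcases lt_or_ge (L x : ℝ) (v x) with hLv | hvL
    · exact ((hg x (L x)).1 le_rfl).1.1 hLv
    refine absurd hwv (not_lt.2 ?_)
    rcases (Int.fract_nonneg (v x)).eq_or_lt with hf | hf
    · exact hg.le_of_le_L_of_fract_eq_zero (hv x) hvL hf.symm
    · have hfl := (hg.floor_eq_of_le_L_of_fract_pos (hv x) hvL hf).1
      exact (fract_le_fract_iff_of_floor_eq hfl).1 (hL x hvL hfl)
  · by_contra! hvU
    refine absurd hvw (not_lt.2 ?_)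
    rcases (Int.fract_nonneg (v x)).eq_or_lt with hf | hf
    · exact hg.le_of_le_U_of_fract_eq_zero (hv x) hvU hf.symm
    · have hfl := hg.floor_eq_of_le_U_of_fract_pos (hv x) hvU hf
      exact (fract_le_fract_iff_of_floor_eq hfl.symm).1 (hU x hvU hfl)

lemma nbd_floor_add_comp_fract {X : Type*} {φ : ℝ → ℝ} (hmono : StrictMonoOn φ (Set.Ico 0 1))
    (h0 : φ 0 = 0) (hmaps : Set.MapsTo φ (Set.Ico 0 1) (Set.Ico 0 1)) (v : X → ℝ) :
    nbd v fun x => ⌊v x⌋ + φ (Int.fract (v x)) := by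
  have hI0 : (0 : ℝ) ∈ Set.Ico 0 1 := Set.left_mem_Ico.2 one_pos
  intro x y
  obtain ⟨hflx, hfrx⟩ :=
    floor_intCast_add_eq_and_fract_intCast_add_eq ⌊v x⌋ (hmaps (fract_mem_Ico (v x)))
  have hfry := (floor_intCast_add_eq_and_fract_intCast_add_eq ⌊v y⌋ (hmaps (fract_mem_Ico (v y)))).2
  rw [hflx, hfrx, hfry]
  refine ⟨rfl, ⟨fun h => h ▸ h0, fun h => hmono.injOn (fract_mem_Ico _) hI0 (h.trans h0.symm)⟩,
    (hmono.lt_iff_lt (fract_mem_Ico _) (fract_mem_Ico _)).2, congrArg φ⟩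

section Constraints

variable {X : Type*} [Fintype X] {L U : X → ℕ} {v v' : X → ℝ}

/-- A pair `(s, r)` asks the adjusted fractional part at level `s` to be `≥ r` (for `B = L`)
or `≤ r` (for `B = U`). -/
noncomputable def fractConstraints (B : X → ℕ) (v v' : X → ℝ) : Finset (ℝ × ℝ) :=
  (Finset.univ.filter fun x => v x ≤ B x ∧ ⌊v x⌋ = ⌊v' x⌋).image
    fun x => (Int.fract (v' x), Int.fract (v x))

lemma forall_mem_fractConstraints {B : X → ℕ} {P : ℝ × ℝ → Prop} :
    (∀ p ∈ fractConstraints B v v', P p) ↔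
      ∀ x, v x ≤ B x → ⌊v x⌋ = ⌊v' x⌋ → P (Int.fract (v' x), Int.fract (v x)) := by
  simp only [fractConstraints, Finset.forall_mem_image, Finset.mem_filter, Finset.mem_univ,
    true_and, and_imp]

lemma exists_strictMonoOn_fractConstraints (hv : ∀ x, 0 ≤ v x) (h : memRLU L U v v') :
    ∃ φ : ℝ → ℝ, StrictMonoOn φ (Set.Ico 0 1) ∧ φ 0 = 0 ∧ Set.MapsTo φ (Set.Ico 0 1) (Set.Ico 0 1) ∧
      (∀ x, v x ≤ L x → ⌊v x⌋ = ⌊v' x⌋ → Int.fract (v x) ≤ φ (Int.fract (v' x))) ∧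
      (∀ x, v x ≤ U x → ⌊v x⌋ = ⌊v' x⌋ → φ (Int.fract (v' x)) ≤ Int.fract (v x)) := by
  have hlo0 : ∀ p ∈ fractConstraints L v v', p.1 ≤ 0 → p.2 ≤ 0 :=
    forall_mem_fractConstraints.2 fun y hL _ hf' => by
      by_contra! hf
      exact hf'.not_gt (h.1.floor_eq_of_le_L_of_fract_pos (hv y) hL hf).2
  have hup0 : ∀ q ∈ fractConstraints U v v', 0 < q.1 → 0 < q.2 :=
    forall_mem_fractConstraints.2 fun x hU hfl hf' => by
      by_contra! hf
      have hle := h.1.le_of_le_U_of_fract_eq_zero (hv x) hU (hf.antisymm (Int.fract_nonneg _))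
      exact hf'.not_ge (((fract_le_fract_iff_of_floor_eq hfl.symm).2 hle).trans hf)
  have hle : ∀ p ∈ fractConstraints L v v', ∀ q ∈ fractConstraints U v v',
      p.1 ≤ q.1 → p.2 ≤ q.2 :=
    forall_mem_fractConstraints.2 fun y hyL hyf => forall_mem_fractConstraints.2
      fun x hxU hxf hle => not_lt.1 fun hlt => hle.not_gt ((h.2 x y hxf hyf hxU hyL).1 hlt)
  have hlt : ∀ p ∈ fractConstraints L v v', ∀ q ∈ fractConstraints U v v',
      p.1 < q.1 → p.2 < q.2 :=
    forall_mem_fractConstraints.2 fun y hyL hyf => forall_mem_fractConstraints.2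
      fun x hxU hxf hlt => not_le.1 fun hle => hlt.not_ge <| by
        rcases hle.lt_or_eq with hlt' | heq
        · exact ((h.2 x y hxf hyf hxU hyL).1 hlt').le
        · exact (h.2 x y hxf hyf hxU hyL).2 heq
  obtain ⟨φ, hmono, h0, hmaps, hlo, hup⟩ := exists_strictMonoOn_between
    (forall_mem_fractConstraints.2 fun x _ _ => Int.fract_lt_one _)
    (forall_mem_fractConstraints.2 fun x _ _ => Int.fract_nonneg _) hlo0 hup0 hle hlt
  exact ⟨φ, hmono, h0, hmaps,
    fun x hL hfl => forall_mem_fractConstraints.1 hlo x hL hfl (fract_mem_Ico _),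
    fun x hU hfl => forall_mem_fractConstraints.1 hup x hU hfl (fract_mem_Ico _)⟩

end Constraints

theorem adjustment_general {X : Type*} [Fintype X] (L U : X → ℕ)
    (v v' : X → ℝ) (hv : ∀ x, 0 ≤ v x)
    (h : memRLU L U v v') :
    ∃ v₁' : X → ℝ, nbd v' v₁' ∧ simLU L U v v₁' := by
  obtain ⟨φ, hmono, h0, hmaps, hlo, hup⟩ := exists_strictMonoOn_fractConstraints hv h
  have hnbd := nbd_floor_add_comp_fract hmono h0 hmaps v'
  have hfract (x : X) : Int.fract (⌊v' x⌋ + φ (Int.fract (v' x))) = φ (Int.fract (v' x)) :=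
    (floor_intCast_add_eq_and_fract_intCast_add_eq _ (hmaps (fract_mem_Ico _))).2
  refine ⟨_, hnbd, simLU_of_sameLUGuards hv (h.1.trans hnbd.sameLUGuards) ?_ ?_⟩
  · intro x hL hfl
    exact (hfract x).symm ▸ hlo x hL (hfl.trans (hnbd x x).1.symm)
  · intro x hU hfl
    exact (hfract x).symm ▸ hup x hU (hfl.trans (hnbd x x).1.symm)

/-- Adjustment lemma: if v' ∈ r_LU(v), there is v₁' ∈ nbd(v') with v ⊑_LU v₁'. -/
theorem adjustment {X : Type*} [Fintype X] (L U : X → ℕ)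
    (v v' : X → ℝ) (hv : ∀ x, 0 ≤ v x) (hv' : ∀ x, 0 ≤ v' x)
    (h : memRLU L U v v') :
    ∃ v₁' : X → ℝ, nbd v' v₁' ∧ simLU L U v v₁' :=
  adjustment_general L U v v' hv h
end

section
/- For a zone Z, the set a_LU(Z) is a union of regions: if two valuations v and w belong to the same region (with respect to bounds α(x) = max(L(x), U(x))) and v ∈ a_LU(Z), then w ∈ a_LU(Z). -/
/-- a_LU(Z) = {v : ∃ v' ∈ Z, v ⊑_LU v'}. -/
def aLU {X : Type*} (L U : X → ℕ) (Z : Set (X → ℝ)) : Set (X → ℝ) :=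
  {v | ∃ v' ∈ Z, simLU L U v v'}

/-- Region equivalence with respect to a bound function α. -/
def regEquiv {X : Type*} (α : X → ℕ) (v w : X → ℝ) : Prop :=
  (∀ x, ((α x : ℝ) < v x ∧ (α x : ℝ) < w x) ∨
    (⌊v x⌋ = ⌊w x⌋ ∧ (Int.fract (v x) = 0 ↔ Int.fract (w x) = 0))) ∧
  (∀ x y, v x ≤ (α x : ℝ) → v y ≤ (α y : ℝ) →
    (Int.fract (v x) < Int.fract (v y) ↔ Int.fract (w x) < Int.fract (w y)))

/-- An atomic zone constraint: `(i, j, strict, c)` means `ev(j) − ev(i) ◁ c`,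
with `ev(none) = 0`, `ev(some x) = v(x)`. -/
def csat {X : Type*} (v : X → ℝ) : Option X × Option X × Bool × ℤ → Prop :=
  fun p =>
    let ev : Option X → ℝ := fun o => o.elim 0 v
    if p.2.2.1 then ev p.2.1 - ev p.1 < (p.2.2.2 : ℝ) else ev p.2.1 - ev p.1 ≤ (p.2.2.2 : ℝ)

/-- A zone is a set of valuations defined by a finite conjunction of difference constraints. -/
def IsZone {X : Type*} (Z : Set (X → ℝ)) : Prop :=
  ∃ l : List (Option X × Option X × Bool × ℤ), Z = {v | ∀ cst ∈ l, csat v cst}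

open Set

theorem Finset.exists_strictMono_eqOn {K : Type*} [Field K] [LinearOrder K]
    [IsStrictOrderedRing K] (s : Finset K) {f : K → K} (hf : StrictMonoOn f s) :
    ∃ F : K → K, StrictMono F ∧ EqOn F f s := by
  classical
  induction s using Finset.induction_on_max with
  | empty => exact ⟨id, strictMono_id, by simp⟩
  | insert a s hlt ih =>
    obtain ⟨F, hF, hFf⟩ := ih (hf.mono (by simp))
    rcases s.eq_empty_or_nonempty with rfl | hne
    · exact ⟨(· + (f a - a)), fun _ _ h => by simpa using h, by simp⟩
    set m := s.max' hne
    have hm : m ∈ s := s.max'_mem hne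
    have hma : m < a := hlt m hm
    have hFm : F m < f a := hFf hm ▸ hf (by simp [hm]) (by simp) hma
    set G : K → K := fun t => F m + (f a - F m) / (a - m) * (t - m)
    have hG : StrictMono G := fun t u htu => by
      have : 0 < (f a - F m) / (a - m) := div_pos (sub_pos.2 hFm) (sub_pos.2 hma)
      simp only [G]; gcongr
    refine ⟨fun t => if t ≤ m then F t else G t, ?_, ?_⟩
    · refine StrictMonoOn.Iic_union_Ici (a := m) ((hF.strictMonoOn _).congr fun t ht => ?_)
        ((hG.strictMonoOn _).congr fun t ht => ?_)
      · simp [show t ≤ m from ht]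
      · rcases (Set.mem_Ici.1 ht).eq_or_lt with rfl | hlt
        · simp [G]
        · simp [not_le.2 hlt]
    · intro t ht
      rcases Finset.mem_insert.1 ht with rfl | ht
      · simp [not_le.2 hma, G, div_mul_cancel₀ _ (sub_ne_zero.2 hma.ne')]
      · have htm : t ≤ m := s.le_max' t ht
        simp [htm, hFf ht]

theorem Set.Finite.exists_strictMono_of_lt_iff_lt {K : Type*} [Field K] [LinearOrder K]
    [IsStrictOrderedRing K] {R : Set (K × K)} (hR : R.Finite)
    (hlt : ∀ p ∈ R, ∀ q ∈ R, p.1 < q.1 ↔ p.2 < q.2) :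
    ∃ F : K → K, StrictMono F ∧ ∀ p ∈ R, F p.1 = p.2 := by
  classical
  have hfun : ∀ p ∈ R, ∀ q ∈ R, p.1 = q.1 → p.2 = q.2 := fun p hp q hq h =>
    le_antisymm (not_lt.1 fun h' => ((hlt q hq p hp).2 h').ne h.symm)
      (not_lt.1 fun h' => ((hlt p hp q hq).2 h').ne h)
  let f : K → K := fun t => if h : ∃ p ∈ R, p.1 = t then h.choose.2 else 0
  have hf : ∀ p ∈ R, f p.1 = p.2 := fun p hp => by
    have h : ∃ q ∈ R, q.1 = p.1 := ⟨p, hp, rfl⟩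
    simp only [f, dif_pos h]
    exact hfun _ h.choose_spec.1 p hp h.choose_spec.2
  obtain ⟨F, hF, hFf⟩ := (hR.toFinset.image Prod.fst).exists_strictMono_eqOn (f := f) (by
    simp only [Finset.coe_image, Set.Finite.coe_toFinset]
    rintro _ ⟨p, hp, rfl⟩ _ ⟨q, hq, rfl⟩ hpq
    rw [hf p hp, hf q hq]
    exact (hlt p hp q hq).1 hpq)
  exact ⟨F, hF, fun p hp => (hFf (by simpa using ⟨p.2, hp⟩)).trans (hf p hp)⟩

theorem Int.ceil_eq_ceil_of_floor_eq {R : Type*} [Ring R] [LinearOrder R]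
    [IsStrictOrderedRing R] [FloorRing R] {a b : R} (hfloor : ⌊a⌋ = ⌊b⌋)
    (hfract : Int.fract a = 0 ↔ Int.fract b = 0) : ⌈a⌉ = ⌈b⌉ := by
  by_cases ha : Int.fract a = 0
  · rw [← Int.floor_add_fract a, ← Int.floor_add_fract b, ha, hfract.1 ha, hfloor]
  · rw [(Int.ceil_eq_floor_add_one_iff_notMem a).2 (Int.fract_eq_zero_iff.not.1 ha),
      (Int.ceil_eq_floor_add_one_iff_notMem b).2 (Int.fract_eq_zero_iff.not.1 (hfract.not.1 ha)),
      hfloor]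

section regEquiv

variable {X : Type*} {α : X → ℕ} {v w : X → ℝ}

theorem regEquiv.floor_eq_and_fract_eq_zero_iff (h : regEquiv α v w) {x : X}
    (hx : v x ≤ α x) : ⌊v x⌋ = ⌊w x⌋ ∧ (Int.fract (v x) = 0 ↔ Int.fract (w x) = 0) :=
  (h.1 x).resolve_left fun h' => hx.not_gt h'.1

theorem regEquiv.lt_of_lt (h : regEquiv α v w) {x : X} (hx : (α x : ℝ) < v x) :
    (α x : ℝ) < w x := by
  rcases h.1 x with h' | ⟨hfloor, hfract⟩
  · exact h'.2
  have := Int.lt_ceil.2 (show ((α x : ℤ) : ℝ) < v x by exact_mod_cast hx)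
  rw [Int.ceil_eq_ceil_of_floor_eq hfloor hfract] at this
  exact_mod_cast Int.lt_ceil.1 this

theorem regEquiv.exists_strictMono_fract [Finite X] (h : regEquiv α v w) :
    ∃ F : ℝ → ℝ, StrictMono F ∧ F 0 = 0 ∧ F 1 = 1 ∧
      ∀ x, v x ≤ α x → F (Int.fract (v x)) = Int.fract (w x) := by
  have hpos : ∀ x, v x ≤ α x → (0 < Int.fract (v x) ↔ 0 < Int.fract (w x)) := by
    intro x hx
    simpa only [(Int.fract_nonneg _).lt_iff_ne', ne_eq, not_iff_not]
      using (h.floor_eq_and_fract_eq_zero_iff hx).2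
  obtain ⟨F, hF, hFR⟩ := Set.Finite.exists_strictMono_of_lt_iff_lt
    (R := insert (0, 0) (insert (1, 1)
      ((fun x => (Int.fract (v x), Int.fract (w x))) '' {x | v x ≤ α x}))) (Set.toFinite _) (by
    simp only [Set.forall_mem_insert, Set.forall_mem_image, Set.mem_ofPred_eq]
    refine ⟨⟨trivial, trivial, hpos⟩, ⟨trivial, trivial, fun x _ => ?_⟩,
      fun x hx => ⟨?_, ?_, fun y hy => h.2 x y hx hy⟩⟩
    · exact iff_of_false (Int.fract_lt_one _).not_gt (Int.fract_lt_one _).not_gt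
    · exact iff_of_false (Int.fract_nonneg _).not_gt (Int.fract_nonneg _).not_gt
    · exact iff_of_true (Int.fract_lt_one _) (Int.fract_lt_one _))
  exact ⟨F, hF, hFR (0, 0) (by simp), hFR (1, 1) (by simp),
    fun x hx => hFR _ (Set.mem_insert_of_mem _ (Set.mem_insert_of_mem _ ⟨x, hx, rfl⟩))⟩

end regEquiv

theorem strictMono_floor_add_fract_comp {F : ℝ → ℝ} (hF : StrictMonoOn F (Icc 0 1))
    (h1 : F 1 = F 0 + 1) : StrictMono fun t => ⌊t⌋ + F (Int.fract t) := by
  have hmem : ∀ t : ℝ, Int.fract t ∈ Icc (0 : ℝ) 1 :=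
    fun t => ⟨Int.fract_nonneg t, (Int.fract_lt_one t).le⟩
  intro s t hst
  rcases (Int.floor_mono hst.le).eq_or_lt with hfloor | hfloor
  · have : Int.fract s < Int.fract t := by
      rw [Int.fract, Int.fract, hfloor]; linarith
    simpa [hfloor] using hF (hmem s) (hmem t) this
  · have hs : F (Int.fract s) < F 1 :=
      hF (hmem s) ⟨zero_le_one, le_rfl⟩ (Int.fract_lt_one s)
    have ht : F 0 ≤ F (Int.fract t) :=
      hF.monotoneOn ⟨le_rfl, zero_le_one⟩ (hmem t) (Int.fract_nonneg t)
    have : (⌊s⌋ : ℝ) + 1 ≤ ⌊t⌋ := by exact_mod_cast hfloor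
    linarith

noncomputable def CircleDeg1Lift.ofIcc (F : ℝ → ℝ) (hF : StrictMonoOn F (Icc 0 1))
    (h1 : F 1 = F 0 + 1) : CircleDeg1Lift where
  toFun t := ⌊t⌋ + F (Int.fract t)
  monotone' := (strictMono_floor_add_fract_comp hF h1).monotone
  map_add_one' t := by simp only [Int.floor_add_one, Int.fract_add_one]; push_cast; ring

theorem CircleDeg1Lift.ofIcc_apply {F : ℝ → ℝ} (hF : StrictMonoOn F (Icc 0 1))
    (h1 : F 1 = F 0 + 1) (t : ℝ) : ofIcc F hF h1 t = ⌊t⌋ + F (Int.fract t) :=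
  rfl

theorem CircleDeg1Lift.strictMono_ofIcc {F : ℝ → ℝ} (hF : StrictMonoOn F (Icc 0 1))
    (h1 : F 1 = F 0 + 1) : StrictMono (ofIcc F hF h1) :=
  strictMono_floor_add_fract_comp hF h1

section CircleDeg1Lift

variable {X : Type*} (f : CircleDeg1Lift)

theorem csat_circleDeg1Lift_comp {u : X → ℝ} {c : Option X × Option X × Bool × ℤ}
    (hf : StrictMono f) (hf0 : f 0 = 0) (h : csat u c) : csat (f ∘ u) c := by
  obtain ⟨i, j, _ | _, k⟩ := c
  all_goals
    have hev : ∀ o : Option X, o.elim 0 (f ∘ u) = f (o.elim 0 u) := by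
      rintro (_ | x) <;> simp [hf0]
    simp only [csat, Bool.false_eq_true, if_true, if_false, hev, sub_le_iff_le_add',
      sub_lt_iff_lt_add'] at h ⊢
  · exact (f.mono h).trans_eq (f.map_add_int _ _)
  · exact (hf h).trans_eq (f.map_add_int _ _)

theorem IsZone.circleDeg1Lift_comp_mem {Z : Set (X → ℝ)} (hZ : IsZone Z) (hf : StrictMono f)
    (hf0 : f 0 = 0) {u : X → ℝ} (hu : u ∈ Z) : f ∘ u ∈ Z := by
  obtain ⟨l, rfl⟩ := hZ
  exact fun c hc => csat_circleDeg1Lift_comp f hf hf0 (hu c hc)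

theorem simLU_circleDeg1Lift_comp {L U : X → ℕ} {v v' w : X → ℝ} (hf : StrictMono f)
    (hf0 : f 0 = 0) (h : simLU L U v v')
    (hw : ∀ x, w x = f (v x) ∨
      (((max (L x) (U x) : ℕ) : ℝ) < v x ∧ ((max (L x) (U x) : ℕ) : ℝ) < w x)) :
    simLU L U w (f ∘ v') := by
  have hfn : ∀ n : ℕ, f n = n := fun n => by
    simpa [hf0] using f.map_int_of_map_zero n
  intro x
  obtain ⟨hL, hU⟩ := h x
  rcases hw x with hwx | ⟨hvx, hwx⟩
  · rw [Function.comp_apply, hwx, hf.lt_iff_lt, hf.lt_iff_lt]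
    exact ⟨fun hlt => hfn (L x) ▸ hf (hL hlt), fun hlt => hfn (U x) ▸ hf (hU hlt)⟩
  · have hLα : (L x : ℝ) ≤ ((max (L x) (U x) : ℕ) : ℝ) := mod_cast le_max_left _ _
    have hUα : (U x : ℝ) ≤ ((max (L x) (U x) : ℕ) : ℝ) := mod_cast le_max_right _ _
    have hLv' : (L x : ℝ) < v' x := by
      rcases lt_or_ge (v' x) (v x) with hlt | hge
      · exact hL hlt
      · linarith
    exact ⟨fun _ => hfn (L x) ▸ hf hLv', fun _ => by linarith⟩

end CircleDeg1Lift

theorem aLU_union_of_regions_general {X : Type*} [Fintype X] (L U : X → ℕ)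
    (Z : Set (X → ℝ)) (hZ : IsZone Z)
    (v w : X → ℝ)
    (hreg : regEquiv (fun x => max (L x) (U x)) v w)
    (hmem : v ∈ aLU L U Z) :
    w ∈ aLU L U Z := by
  obtain ⟨v', hv'Z, hsim⟩ := hmem
  obtain ⟨F, hF, hF0, hF1, hFv⟩ := hreg.exists_strictMono_fract
  set f := CircleDeg1Lift.ofIcc F (hF.strictMonoOn _) (by rw [hF0, hF1, zero_add])
  have hf : StrictMono f := CircleDeg1Lift.strictMono_ofIcc _ _
  have hf0 : f 0 = 0 := by simp [f, CircleDeg1Lift.ofIcc_apply, hF0]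
  refine ⟨f ∘ v', hZ.circleDeg1Lift_comp_mem f hf hf0 hv'Z,
    simLU_circleDeg1Lift_comp f hf hf0 hsim fun x => ?_⟩
  by_cases hx : v x ≤ ((max (L x) (U x) : ℕ) : ℝ)
  · left
    rw [CircleDeg1Lift.ofIcc_apply, hFv x hx, (hreg.floor_eq_and_fract_eq_zero_iff hx).1,
      Int.floor_add_fract]
  · exact Or.inr ⟨not_le.1 hx, hreg.lt_of_lt (not_le.1 hx)⟩

/-- For a zone Z, a_LU(Z) is a union of regions (w.r.t. α(x) = max(L(x), U(x))). -/
theorem aLU_union_of_regions {X : Type*} [Fintype X] (L U : X → ℕ)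
    (Z : Set (X → ℝ)) (hZ : IsZone Z)
    (v w : X → ℝ) (hv : ∀ x, 0 ≤ v x) (hw : ∀ x, 0 ≤ w x)
    (hreg : regEquiv (fun x => max (L x) (U x)) v w)
    (hmem : v ∈ aLU L U Z) :
    w ∈ aLU L U Z :=
  aLU_union_of_regions_general L U Z hZ v w hreg hmem
end
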